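/- For every n ≥ 2, ∫₀¹ (x² − 1)·[C^{(2)}_{n−2}(x)]² dx = −((2n² − 1)/16)·(ψ(n + 1/2) + γ + log 4) + n²/8. -/

import Mathlib

/-!
With `C²ₘ = U'ₘ₊₁ / 2`, the identity `(x² - 1) U'_M² = M² U_M² - 4 ∑_{k < M} (k + 1) U_k²`
turns the integrand into a combination of the squares `U_k(x)²`. Since
`U_k² = U₀ + U₂ + ⋯ + U_{2k}` and `U_{2j} = T'_{2j+1} / (2j + 1)` with `T_{2j+1}(1) = 1`,
`T_{2j+1}(0) = 0`, one gets `∫₀¹ U_k² = ∑_{j ≤ k} 1 / (2j + 1)`. A summation by parts and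
`ψ(n + 1/2) = -γ - 2 log 2 + 2 ∑_{j < n} 1 / (2j + 1)` give the closed form.
-/

open Polynomial Real

/-- The digamma function `ψ(x) = d/dx log Γ(x)`. -/
noncomputable def digamma (x : ℝ) : ℝ := deriv (fun y => Real.log (Real.Gamma y)) x

/-- The Gegenbauer polynomial of index 2, defined by `2 C²ₙ(x) = d/dx U_{n+1}(x)`. -/
noncomputable def gegenbauer2 (n : ℕ) : Polynomial ℝ :=
  Polynomial.C (1 / 2 : ℝ) * Polynomial.derivative (Polynomial.Chebyshev.U ℝ (n + 1))

open Finset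

namespace Polynomial.Chebyshev

variable (R : Type*) [CommRing R]

theorem U_mul_U_sub_U_mul_U (m n : ℤ) :
    U R m * U R n - U R (m - 1) * U R (n - 1) = U R (m + n) := by
  induction n using Polynomial.Chebyshev.induct with
  | zero => simp [U_neg_one]
  | one =>
    simp only [U_one, sub_self, U_zero]
    linear_combination (U_add_one R m).symm
  | add_two n ih₁ ih₀ =>
    have h₁ := U_add_two R n
    have h₂ := U_add_one R (m + n + 1)
    have h₃ := U_add_one R (n : ℤ)
    linear_combination (norm := ring_nf) U R m * h₁ - U R (m - 1) * h₃ + 2 * X * ih₁ - ih₀ - h₂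
  | neg_add_one n ih₀ ih₁ =>
    have h₁ := U_sub_one R (-n : ℤ)
    have h₂ := U_sub_one R (-n - 1 : ℤ)
    have h₃ := U_sub_one R (m - n)
    linear_combination (norm := ring_nf) U R m * h₁ - U R (m - 1) * h₂ + 2 * X * ih₀ - ih₁ - h₃

theorem U_sq_eq_sum (k : ℕ) : U R k ^ 2 = ∑ j ∈ range (k + 1), U R (2 * j) := by
  induction k with
  | zero => simp
  | succ k ih =>
    rw [sum_range_succ, ← ih]
    have h := U_mul_U_sub_U_mul_U R (k + 1) (k + 1)
    push_cast
    linear_combination (norm := ring_nf) h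

theorem one_sub_X_sq_mul_derivative_U (n : ℤ) :
    (1 - X ^ 2) * derivative (U R n)
      = ((n : R[X]) + 1) * U R (n - 1) - (n : R[X]) * X * U R n := by
  have h₁ := add_one_mul_T_eq_poly_in_U (R := R) n
  have h₂ := T_eq_U_sub_X_mul_U R (n + 1)
  have h₃ := U_add_one R n
  linear_combination (norm := ring_nf) h₁ - (n + 1) * h₂ - (n + 1) * h₃

-- Multiplying by `1 - X²` eliminates the derivative; the induction step is then a ring identity
-- in `U_M` and `U_{M+1}`.
theorem sq_one_sub_X_sq_mul_derivative_U (M : ℕ) :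
    ((1 - X ^ 2) * derivative (U R M)) ^ 2
      = (X ^ 2 - 1) *
        ((M : R[X]) ^ 2 * U R M ^ 2 - 4 * ∑ k ∈ range M, ((k : R[X]) + 1) * U R k ^ 2) := by
  induction M with
  | zero => simp
  | succ M ih =>
    rw [one_sub_X_sq_mul_derivative_U] at ih ⊢
    rw [U_sub_one R M] at ih
    push_cast at ih ⊢
    rw [sum_range_succ, add_sub_cancel_right]
    linear_combination ih

theorem X_sq_sub_one_mul_derivative_U_sq [IsDomain R] (M : ℕ) :
    (X ^ 2 - 1) * derivative (U R M) ^ 2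
      = (M : R[X]) ^ 2 * U R M ^ 2 - 4 * ∑ k ∈ range M, ((k : R[X]) + 1) * U R k ^ 2 := by
  have hX : (X ^ 2 - 1 : R[X]) ≠ 0 := (monic_X_pow_sub_C (1 : R) two_ne_zero).ne_zero
  refine mul_left_cancel₀ hX ?_
  linear_combination sq_one_sub_X_sq_mul_derivative_U R M

end Polynomial.Chebyshev

open Polynomial.Chebyshev

theorem integral_eval_U_two_mul (j : ℕ) :
    ∫ x in (0 : ℝ)..1, (U ℝ (2 * j)).eval x = 1 / (2 * j + 1) := by
  have hT : derivative (T ℝ (2 * j + 1)) = (2 * (j : ℝ[X]) + 1) * U ℝ (2 * j) := by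
    simpa using T_derivative_eq_U (R := ℝ) (2 * j + 1)
  have hodd : Odd (2 * (j : ℤ) + 1) := odd_two_mul_add_one _
  have hFTC := intervalIntegral.integral_eq_sub_of_hasDerivAt
    (fun x _ => (T ℝ (2 * j + 1)).hasDerivAt x)
    ((derivative _).continuous.intervalIntegrable (μ := MeasureTheory.volume) 0 1)
  rw [eq_div_iff (by positivity), mul_comm, ← intervalIntegral.integral_const_mul]
  simpa [hT, T_eval_one, T_eval_zero_of_odd (R := ℝ) hodd] using hFTC

noncomputable def oddHarmonic (n : ℕ) : ℝ := ∑ j ∈ range n, 1 / (2 * (j : ℝ) + 1)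

theorem oddHarmonic_succ (n : ℕ) : oddHarmonic (n + 1) = oddHarmonic n + 1 / (2 * n + 1) :=
  sum_range_succ _ _

theorem integral_eval_U_sq (k : ℕ) :
    ∫ x in (0 : ℝ)..1, (U ℝ k).eval x ^ 2 = oddHarmonic (k + 1) := by
  simp_rw [← eval_pow, U_sq_eq_sum, eval_finsetSum]
  rw [intervalIntegral.integral_finsetSum fun j _ => (U ℝ _).continuous.intervalIntegrable _ _]
  exact sum_congr rfl fun j _ => integral_eval_U_two_mul j

theorem sum_range_mul_oddHarmonic (n : ℕ) :
    ∑ k ∈ range n, ((k : ℝ) + 1) * oddHarmonic (k + 1)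
      = (2 * n + 1) ^ 2 / 8 * oddHarmonic n - n ^ 2 / 8 := by
  induction n with
  | zero => simp [oddHarmonic]
  | succ n ih =>
    rw [sum_range_succ, ih, oddHarmonic_succ]
    push_cast
    field_simp
    ring

theorem integral_X_sq_sub_one_mul_derivative_U_sq (M : ℕ) :
    ∫ x in (0 : ℝ)..1, (x ^ 2 - 1) * (derivative (U ℝ M)).eval x ^ 2
      = M ^ 2 * oddHarmonic (M + 1) - 4 * ∑ k ∈ range M, ((k : ℝ) + 1) * oddHarmonic (k + 1) := by
  have hpoly (x : ℝ) : (x ^ 2 - 1) * (derivative (U ℝ M)).eval x ^ 2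
      = M ^ 2 * (U ℝ M).eval x ^ 2 - 4 * ∑ k ∈ range M, ((k : ℝ) + 1) * (U ℝ k).eval x ^ 2 := by
    simpa [eval_finsetSum] using congrArg (eval x) (X_sq_sub_one_mul_derivative_U_sq ℝ M)
  have hint (k : ℕ) : IntervalIntegrable (fun x => ((k : ℝ) + 1) * (U ℝ k).eval x ^ 2)
      MeasureTheory.volume 0 1 :=
    Continuous.intervalIntegrable (by fun_prop) _ _
  simp_rw [hpoly]
  rw [intervalIntegral.integral_sub, intervalIntegral.integral_const_mul,
    intervalIntegral.integral_const_mul, intervalIntegral.integral_finsetSum fun k _ => hint k]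
  · simp_rw [intervalIntegral.integral_const_mul, integral_eval_U_sq]
  all_goals exact Continuous.intervalIntegrable (by fun_prop) _ _

theorem digamma_add_one {x : ℝ} (hx : 0 < x) : digamma (x + 1) = digamma x + 1 / x := by
  have hdiff {y : ℝ} (hy : 0 < y) : DifferentiableAt ℝ (fun y => log (Gamma y)) y :=
    (differentiableAt_Gamma fun m => ((neg_nonpos.mpr m.cast_nonneg).trans_lt hy).ne').log
      (Gamma_pos_of_pos hy).ne'
  rw [digamma, digamma, ← deriv_comp_add_const, one_div, ← deriv_log,
    ← deriv_add (hdiff hx) (differentiableAt_log hx.ne')]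
  apply Filter.EventuallyEq.deriv_eq
  filter_upwards [eventually_gt_nhds hx] with y hy
  simp only [Pi.add_apply, Gamma_add_one hy.ne', log_mul hy.ne' (Gamma_pos_of_pos hy).ne',
    add_comm]

theorem digamma_one_half : digamma (1 / 2) = -(eulerMascheroniConstant + 2 * log 2) := by
  have h := hasDerivAt_Gamma_one_half.log (Gamma_pos_of_pos one_half_pos).ne'
  rw [digamma, h.deriv, Gamma_one_half_eq]
  have : sqrt π ≠ 0 := by positivity
  field_simp

theorem digamma_nat_add_one_half (n : ℕ) :
    digamma (n + 1 / 2) = -(eulerMascheroniConstant + 2 * log 2) + 2 * oddHarmonic n := by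
  induction n with
  | zero => simpa [oddHarmonic] using digamma_one_half
  | succ n ih =>
    have hpos : (0 : ℝ) < n + 1 / 2 := by positivity
    rw [Nat.cast_succ, add_right_comm, digamma_add_one hpos, ih, oddHarmonic_succ]
    field_simp
    ring

theorem integral_gegenbauer2_weighted (n : ℕ) (hn : 2 ≤ n) :
    (∫ x in (0 : ℝ)..1, (x ^ 2 - 1) * ((gegenbauer2 (n - 2)).eval x) ^ 2)
      = -((2 * (n : ℝ) ^ 2 - 1) / 16)
          * (digamma ((n : ℝ) + 1 / 2) + Real.eulerMascheroniConstant + Real.log 4)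
        + (n : ℝ) ^ 2 / 8 := by
  obtain ⟨m, rfl⟩ : ∃ m, n = m + 1 + 1 := ⟨n - 2, by omega⟩
  have hC (x : ℝ) : (x ^ 2 - 1) * (gegenbauer2 (m + 1 + 1 - 2)).eval x ^ 2
      = (x ^ 2 - 1) * (derivative (U ℝ (m + 1 : ℕ))).eval x ^ 2 / 4 := by
    simp only [gegenbauer2, one_div, Nat.reduceSubDiff, eval_mul, eval_C, Nat.cast_add,
      Nat.cast_one]
    ring
  have hlog4 : log 4 = 2 * log 2 := by
    rw [show (4 : ℝ) = 2 ^ 2 by norm_num, log_pow, Nat.cast_ofNat]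
  simp_rw [hC]
  rw [intervalIntegral.integral_div, integral_X_sq_sub_one_mul_derivative_U_sq,
    sum_range_mul_oddHarmonic, digamma_nat_add_one_half, oddHarmonic_succ, hlog4]
  push_cast
  field_simp
  ring
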